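/- arXiv:1902.09015 — 2 statements merged into one kernel-verified Lean document; each statement's English description precedes it below -/
import Mathlib

section
/- In a binary tree-child phylogenetic network with n leaves and h hybrid nodes, the set of tree nodes having neither a hybrid parent nor a hybrid sibling consists of the root together with (n - h - 1) pairs of sibling tree nodes. -/
/-!
Counting arcs in two ways gives `|V| = 2n + 2h - 1`, hence `2n + h - 1` tree nodes. The child of
a hybrid node is a tree node, giving `h` tree nodes with a hybrid parent; each of the two parents
of a hybrid node has exactly one other child, a tree node with a hybrid sibling but no hybrid
parent, giving `2h` more. The remaining `2n - 2h - 1` tree nodes are hybrid-free. Apart from the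
root, each of them has exactly one sibling, and that sibling is hybrid-free again, so the sibling
relation pairs them off.
-/

/-- In-degree of a node in a directed graph given by its arc relation. -/
noncomputable def indeg {V : Type} (A : V → V → Prop) (v : V) : ℕ := Nat.card {u : V // A u v}

/-- Out-degree of a node in a directed graph given by its arc relation. -/
noncomputable def outdeg {V : Type} (A : V → V → Prop) (v : V) : ℕ := Nat.card {u : V // A v u}

/-- A leaf: degrees (1,0). -/
def IsLeaf {V : Type} (A : V → V → Prop) (v : V) : Prop :=
  indeg A v = 1 ∧ outdeg A v = 0

/-- A tree node: degrees (1,0) (leaf), (0,2) (root) or (1,2) (internal tree node). -/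
def IsTreeNode {V : Type} (A : V → V → Prop) (v : V) : Prop :=
  (indeg A v = 1 ∧ outdeg A v = 0) ∨ (indeg A v = 0 ∧ outdeg A v = 2) ∨
    (indeg A v = 1 ∧ outdeg A v = 2)

/-- A hybrid node: degrees (2,1). -/
def IsHybrid {V : Type} (A : V → V → Prop) (v : V) : Prop :=
  indeg A v = 2 ∧ outdeg A v = 1

/-- A binary tree-child phylogenetic network on the (finite) node set `V`:
a DAG with a single root, all of whose nodes are tree nodes or hybrid nodes,
and where every non-leaf node has a child that is a tree node. -/
structure BTC (V : Type) [Finite V] where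
  Arc : V → V → Prop
  acyclic : ∀ v : V, ¬ Relation.TransGen Arc v v
  uniqueRoot : ∃! r : V, indeg Arc r = 0
  binary : ∀ v : V, IsTreeNode Arc v ∨ IsHybrid Arc v
  treeChild : ∀ v : V, 0 < outdeg Arc v → ∃ w : V, Arc v w ∧ IsTreeNode Arc w

/-- A tree node has a hybrid parent. -/
def HasHybridParent {V : Type} (A : V → V → Prop) (u : V) : Prop :=
  ∃ w : V, IsHybrid A w ∧ A w u

/-- A node has a hybrid sibling (a hybrid node sharing a parent with it). -/
def HasHybridSibling {V : Type} (A : V → V → Prop) (u : V) : Prop :=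
  ∃ w x : V, IsHybrid A w ∧ w ≠ u ∧ A x u ∧ A x w

open Finset

section Counting

variable {α β : Type*}

theorem Nat.card_eq_of_existsUnique {p : α → Prop} {q : β → Prop} (r : α → β → Prop)
    (hp : ∀ a, p a → ∃! b, q b ∧ r a b) (hq : ∀ b, q b → ∃! a, p a ∧ r a b) :
    Nat.card {a // p a} = Nat.card {b // q b} := by
  choose f hf hf_unique using hp
  choose g hg hg_unique using hq
  exact Nat.card_congr
    { toFun := fun a => ⟨f a a.2, (hf a a.2).1⟩
      invFun := fun b => ⟨g b b.2, (hg b b.2).1⟩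
      left_inv := fun a => Subtype.ext (hg_unique _ _ a ⟨a.2, (hf a a.2).2⟩).symm
      right_inv := fun b => Subtype.ext (hf_unique _ _ b ⟨b.2, (hg b b.2).2⟩).symm }

theorem Nat.card_subtype_and_add_card_subtype_and_not [Finite α] (p q : α → Prop) :
    Nat.card {a // p a ∧ q a} + Nat.card {a // p a ∧ ¬ q a} = Nat.card {a // p a} := by
  classical
  rw [← Nat.card_congr (Equiv.subtypeSubtypeEquivSubtypeInter p q),
    ← Nat.card_congr (Equiv.subtypeSubtypeEquivSubtypeInter p (¬ q ·)), ← Nat.card_sum,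
    Nat.card_congr (Equiv.sumCompl fun a : {a // p a} => q a)]

theorem Finset.two_mul_card_eq_of_existsUnique {P : Finset (α × α)} {S : Finset α}
    (hP : ∀ q ∈ P, q.1 ≠ q.2 ∧ q.1 ∈ S ∧ q.2 ∈ S)
    (hS : ∀ u ∈ S, ∃! q, q ∈ P ∧ (u = q.1 ∨ u = q.2)) : 2 * #P = #S := by
  classical
  have := card_mul_eq_card_mul (s := P) (t := S) (fun q u => u = q.1 ∨ u = q.2) (m := 2) (n := 1)
    (fun q hq => by
      obtain ⟨hne, h1, h2⟩ := hP q hq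
      rw [← card_pair hne]
      congr 1
      ext u
      simp only [mem_bipartiteAbove, mem_insert, mem_singleton, and_iff_right_iff_imp]
      rintro (rfl | rfl) <;> assumption)
    (fun u hu => card_eq_one_iff_existsUnique.2 (by
      simpa only [mem_bipartiteBelow] using hS u hu))
  omega

theorem Finset.exists_pairing {S : Finset α} {R : α → α → Prop} (hsymm : ∀ u w, R u w → R w u)
    (hirr : ∀ u, ¬ R u u) (hS : ∀ u ∈ S, ∃! w, w ∈ S ∧ R u w) :
    ∃ P : Finset (α × α), 2 * #P = #S ∧ (∀ q ∈ P, R q.1 q.2) ∧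
      (∀ q ∈ P, ∀ q' ∈ P, q ≠ q' → q.1 ≠ q'.1 ∧ q.1 ≠ q'.2 ∧ q.2 ≠ q'.1 ∧ q.2 ≠ q'.2) ∧
      ∀ u, u ∈ S ↔ ∃ q ∈ P, u = q.1 ∨ u = q.2 := by
  classical
  let _ := IsWellOrder.linearOrder (WellOrderingRel (α := α))
  set P := (S ×ˢ S).filter (fun q => R q.1 q.2 ∧ q.1 < q.2)
  have hmemP : ∀ a b, (a, b) ∈ P ↔ (a ∈ S ∧ b ∈ S) ∧ R a b ∧ a < b := by simp [P]
  have hunique : ∀ u ∈ S, ∃! q, q ∈ P ∧ (u = q.1 ∨ u = q.2) := by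
    intro u hu
    obtain ⟨w, ⟨hw, huw⟩, hw_unique⟩ := hS u hu
    have hne : u ≠ w := by rintro rfl; exact hirr u huw
    refine ⟨(min u w, max u w), ?_, ?_⟩
    · rcases hne.lt_or_gt with h | h
      · simp [hmemP, min_eq_left h.le, max_eq_right h.le, hu, hw, huw, h]
      · simp [hmemP, min_eq_right h.le, max_eq_left h.le, hu, hw, hsymm _ _ huw, h]
    · rintro ⟨a, b⟩ ⟨hq, hua | hub⟩ <;> obtain ⟨⟨ha, hb⟩, hab, hlt⟩ := (hmemP a b).1 hq
      · subst hua
        obtain rfl := hw_unique b ⟨hb, hab⟩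
        simp [min_eq_left hlt.le, max_eq_right hlt.le]
      · subst hub
        obtain rfl := hw_unique a ⟨ha, hsymm _ _ hab⟩
        simp [min_eq_right hlt.le, max_eq_left hlt.le]
  have hmemS : ∀ q ∈ P, q.1 ≠ q.2 ∧ q.1 ∈ S ∧ q.2 ∈ S := fun ⟨a, b⟩ hq =>
    let ⟨hab, _, hlt⟩ := (hmemP a b).1 hq
    ⟨hlt.ne, hab⟩
  refine ⟨P, two_mul_card_eq_of_existsUnique hmemS hunique, fun ⟨a, b⟩ hq => ((hmemP a b).1 hq).2.1,
    fun q hq q' hq' hne => ?_, fun u => ⟨fun hu => (hunique u hu).exists, ?_⟩⟩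
  · have key : ∀ u ∈ S, (u = q.1 ∨ u = q.2) → (u = q'.1 ∨ u = q'.2) → False :=
      fun u hu h h' => hne ((hunique u hu).unique ⟨hq, h⟩ ⟨hq', h'⟩)
    obtain ⟨-, h1, h2⟩ := hmemS q hq
    exact ⟨fun h => key _ h1 (.inl rfl) (.inl h), fun h => key _ h1 (.inl rfl) (.inr h),
      fun h => key _ h2 (.inr rfl) (.inl h), fun h => key _ h2 (.inr rfl) (.inr h)⟩
  · rintro ⟨q, hq, rfl | rfl⟩
    exacts [(hmemS q hq).2.1, (hmemS q hq).2.2]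

end Counting

section Digraph

open scoped Classical

variable {V : Type}

def Siblings (A : V → V → Prop) (u w : V) : Prop := u ≠ w ∧ ∃ x, A x u ∧ A x w

def IsHybridFreeTreeNode (A : V → V → Prop) (u : V) : Prop :=
  IsTreeNode A u ∧ ¬ HasHybridParent A u ∧ ¬ HasHybridSibling A u

variable {A : V → V → Prop}

theorem Siblings.symm {u w : V} (h : Siblings A u w) : Siblings A w u :=
  ⟨h.1.symm, h.2.imp fun _ hx => hx.symm⟩

theorem IsHybrid.not_isTreeNode {v : V} (hv : IsHybrid A v) : ¬ IsTreeNode A v := by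
  obtain ⟨h1, h2⟩ := hv
  rintro (⟨a, b⟩ | ⟨a, b⟩ | ⟨a, b⟩) <;> omega

/-- Summed over all nodes, with `sum_indeg_eq_sum_outdeg`, this gives
`|V| + #roots = 2 #leaves + 2 #hybrids`. -/
theorem indeg_add_one_add_ite (v : V) (hv : IsTreeNode A v ∨ IsHybrid A v) :
    indeg A v + 1 + (if indeg A v = 0 then 1 else 0) =
      outdeg A v + 2 * (if IsLeaf A v then 1 else 0) + 2 * (if IsHybrid A v then 1 else 0) := by
  rcases hv with (⟨h1, h2⟩ | ⟨h1, h2⟩ | ⟨h1, h2⟩) | ⟨h1, h2⟩ <;>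
    simp [IsLeaf, IsHybrid, h1, h2]

variable [Fintype V]

theorem indeg_eq_card (v : V) : indeg A v = #{u | A u v} := by
  rw [indeg, Nat.card_eq_fintype_card, Fintype.card_subtype]

theorem outdeg_eq_card (v : V) : outdeg A v = #{u | A v u} := by
  rw [outdeg, Nat.card_eq_fintype_card, Fintype.card_subtype]

theorem sum_indeg_eq_sum_outdeg : ∑ v, indeg A v = ∑ v, outdeg A v := by
  simp_rw [indeg_eq_card, outdeg_eq_card, card_filter]
  exact sum_comm

theorem indeg_ne_zero_of_arc {x v : V} (h : A x v) : indeg A v ≠ 0 := by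
  rw [indeg_eq_card, ← pos_iff_ne_zero, card_pos]
  exact ⟨x, by simpa using h⟩

theorem outdeg_ne_zero_of_arc {v x : V} (h : A v x) : outdeg A v ≠ 0 := by
  rw [outdeg_eq_card, ← pos_iff_ne_zero, card_pos]
  exact ⟨x, by simpa using h⟩

theorem Siblings.indeg_ne_zero {u w : V} (h : Siblings A u w) : indeg A w ≠ 0 :=
  let ⟨_, _, _, hxw⟩ := h
  indeg_ne_zero_of_arc hxw

theorem eq_of_arc_of_indeg_le_one {v x y : V} (h : indeg A v ≤ 1) (hx : A x v) (hy : A y v) :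
    x = y := by
  rw [indeg_eq_card, card_le_one] at h
  exact h x (by simpa using hx) y (by simpa using hy)

theorem eq_of_arc_of_outdeg_le_one {v x y : V} (h : outdeg A v ≤ 1) (hx : A v x) (hy : A v y) :
    x = y := by
  rw [outdeg_eq_card, card_le_one] at h
  exact h x (by simpa using hx) y (by simpa using hy)

theorem eq_of_arc_of_outdeg_le_two {x u v w : V} (h : outdeg A x ≤ 2) (hu : A x u) (hv : A x v)
    (hw : A x w) (huw : u ≠ w) (hvw : v ≠ w) : u = v := by
  by_contra huv
  rw [outdeg_eq_card] at h
  exact h.not_gt (two_lt_card.2 ⟨u, by simpa using hu, v, by simpa using hv, w, by simpa using hw,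
    huv, huw, hvw⟩)

theorem IsTreeNode.eq_of_arc {u x y : V} (hu : IsTreeNode A u) (hx : A x u) (hy : A y u) :
    x = y :=
  eq_of_arc_of_indeg_le_one (by rcases hu with ⟨h, -⟩ | ⟨h, -⟩ | ⟨h, -⟩ <;> omega) hx hy

theorem IsHybrid.eq_of_arc {w x y : V} (hw : IsHybrid A w) (hx : A w x) (hy : A w y) : x = y :=
  eq_of_arc_of_outdeg_le_one hw.2.le hx hy

theorem card_arc_of_indeg_eq {p : V → Prop} {k : ℕ} (h : ∀ v, p v → indeg A v = k) :
    Nat.card {e : V × V // p e.2 ∧ A e.1 e.2} = k * Nat.card {v // p v} := by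
  let arcsEquiv : {e : V × V // p e.2 ∧ A e.1 e.2} ≃ (v : {v // p v}) × {u // A u v} :=
    { toFun := fun e => ⟨⟨e.1.2, e.2.1⟩, ⟨e.1.1, e.2.2⟩⟩
      invFun := fun s => ⟨(s.2.1, s.1.1), s.1.2, s.2.2⟩
      left_inv := fun _ => rfl
      right_inv := fun _ => rfl }
  rw [Nat.card_congr arcsEquiv, Nat.card_sigma, Nat.card_eq_fintype_card, mul_comm, ← smul_eq_mul,
    ← card_univ, ← sum_const]
  exact sum_congr rfl fun v _ => h v v.2

end Digraph

namespace BTC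

open scoped Classical

variable {V : Type} [Fintype V] {N : BTC V}

variable (N) in
theorem outdeg_le_two (x : V) : outdeg N.Arc x ≤ 2 := by
  rcases N.binary x with (⟨-, h⟩ | ⟨-, h⟩ | ⟨-, h⟩) | ⟨-, h⟩ <;> omega

theorem exists_arc_ne {x u : V} (hx : ¬ IsHybrid N.Arc x) (hxu : N.Arc x u) :
    ∃ w, N.Arc x w ∧ w ≠ u := by
  have h2 : outdeg N.Arc x = 2 := by
    have := outdeg_ne_zero_of_arc hxu
    rcases N.binary x with (⟨-, h⟩ | ⟨-, h⟩ | ⟨-, h⟩) | h <;> first | omega | exact absurd h hx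
  rw [outdeg_eq_card] at h2
  simpa using exists_mem_ne (s := {w | N.Arc x w}) (by omega) u

theorem isTreeNode_of_isHybrid_of_arc {w u : V} (hw : IsHybrid N.Arc w) (hwu : N.Arc w u) :
    IsTreeNode N.Arc u := by
  obtain ⟨c, hwc, hc⟩ := N.treeChild w (by rw [hw.2]; exact Nat.one_pos)
  rwa [hw.eq_of_arc hwu hwc]

theorem not_isHybrid_of_arc_isHybrid {x w : V} (hw : IsHybrid N.Arc w) (hxw : N.Arc x w) :
    ¬ IsHybrid N.Arc x :=
  fun hx => hw.not_isTreeNode (isTreeNode_of_isHybrid_of_arc hx hxw)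

theorem isTreeNode_of_arc_of_arc_isHybrid {x u w : V} (hw : IsHybrid N.Arc w) (hxu : N.Arc x u)
    (hxw : N.Arc x w) (huw : u ≠ w) : IsTreeNode N.Arc u := by
  obtain ⟨c, hxc, hc⟩ := N.treeChild x (pos_iff_ne_zero.2 (outdeg_ne_zero_of_arc hxu))
  have hcw : c ≠ w := by rintro rfl; exact hw.not_isTreeNode hc
  rwa [eq_of_arc_of_outdeg_le_two (N.outdeg_le_two x) hxu hxc hxw huw hcw]

theorem not_hasHybridParent_of_arc {x u : V} (hu : IsTreeNode N.Arc u) (hxu : N.Arc x u)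
    (hx : ¬ IsHybrid N.Arc x) : ¬ HasHybridParent N.Arc u := by
  rintro ⟨y, hy, hyu⟩
  exact hx (hu.eq_of_arc hyu hxu ▸ hy)

theorem eq_of_siblings {u w w' : V} (hu : IsTreeNode N.Arc u) (hw : Siblings N.Arc u w)
    (hw' : Siblings N.Arc u w') : w = w' := by
  obtain ⟨huw, x, hxu, hxw⟩ := hw
  obtain ⟨huw', x', hx'u, hx'w'⟩ := hw'
  obtain rfl := hu.eq_of_arc hxu hx'u
  exact eq_of_arc_of_outdeg_le_two (N.outdeg_le_two x) hxw hx'w' hxu huw.symm huw'.symm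

theorem isHybridFreeTreeNode_of_indeg_eq_zero {r : V} (hr : indeg N.Arc r = 0) :
    IsHybridFreeTreeNode N.Arc r := by
  have hnone : ∀ x, ¬ N.Arc x r := fun x hx => indeg_ne_zero_of_arc hx hr
  refine ⟨(N.binary r).resolve_right fun h => by rw [h.1] at hr; omega, ?_, ?_⟩
  · rintro ⟨w, -, hw⟩
    exact hnone w hw
  · rintro ⟨-, x, -, -, hx, -⟩
    exact hnone x hx

theorem existsUnique_siblings_of_isHybridFreeTreeNode {u : V}
    (hu : IsHybridFreeTreeNode N.Arc u) (hu0 : indeg N.Arc u ≠ 0) :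
    ∃! w, (IsHybridFreeTreeNode N.Arc w ∧ indeg N.Arc w ≠ 0) ∧ Siblings N.Arc u w := by
  obtain ⟨hut, hup, hus⟩ := hu
  obtain ⟨x, hxu⟩ : ∃ x, N.Arc x u := by
    simpa [indeg_eq_card, filter_eq_empty_iff] using hu0
  have hx : ¬ IsHybrid N.Arc x := fun hx => hup ⟨x, hx, hxu⟩
  obtain ⟨w, hxw, hwu⟩ := exists_arc_ne hx hxu
  have huw : Siblings N.Arc u w := ⟨hwu.symm, x, hxu, hxw⟩
  have hwt : IsTreeNode N.Arc w :=
    (N.binary w).resolve_right fun hw => hus ⟨w, x, hw, hwu, hxu, hxw⟩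
  refine ⟨w, ⟨⟨⟨hwt, not_hasHybridParent_of_arc hwt hxw hx, ?_⟩, huw.indeg_ne_zero⟩, huw⟩,
    fun w' hw' => eq_of_siblings hut hw'.2 huw⟩
  rintro ⟨w', x', hw', hw'w, hx'w, hx'w'⟩
  obtain rfl := hwt.eq_of_arc hx'w hxw
  have hw'u : w' = u :=
    eq_of_arc_of_outdeg_le_two (N.outdeg_le_two x') hx'w' hxu hxw hw'w hwu.symm
  exact hw'.not_isTreeNode (hw'u ▸ hut)

variable (N)

theorem card_add_one_eq :
    Nat.card V + 1 = 2 * Nat.card {v // IsLeaf N.Arc v} + 2 * Nat.card {v // IsHybrid N.Arc v} := by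
  obtain ⟨r, hr, hr_unique⟩ := N.uniqueRoot
  have hroot : Nat.card {v // indeg N.Arc v = 0} = 1 :=
    Nat.card_eq_one_iff_exists.2 ⟨⟨r, hr⟩, fun v => Subtype.ext (hr_unique v v.2)⟩
  have := sum_congr rfl fun v (_ : v ∈ univ) => indeg_add_one_add_ite v (N.binary v)
  simp only [sum_add_distrib, ← mul_sum, ← card_filter, sum_const, card_univ, smul_eq_mul,
    mul_one, sum_indeg_eq_sum_outdeg] at this
  simp only [Nat.card_eq_fintype_card, Fintype.card_subtype] at hroot ⊢
  omega

theorem card_isTreeNode_add_card_isHybrid :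
    Nat.card {v // IsTreeNode N.Arc v} + Nat.card {v // IsHybrid N.Arc v} = Nat.card V := by
  rw [Nat.card_congr (Equiv.subtypeEquivRight fun v =>
      ⟨fun h => h.not_isTreeNode, (N.binary v).resolve_left⟩),
    ← Nat.card_congr (Equiv.sumCompl (IsTreeNode N.Arc)), Nat.card_sum]

/-- A hybrid node has a single child, and it is a tree node. -/
theorem card_isTreeNode_hasHybridParent :
    Nat.card {u // IsTreeNode N.Arc u ∧ HasHybridParent N.Arc u} =
      Nat.card {w // IsHybrid N.Arc w} := by
  refine (Nat.card_eq_of_existsUnique (fun w u => N.Arc w u) (fun w hw => ?_) fun u hu => ?_).symm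
  · obtain ⟨u, hwu, hu⟩ := N.treeChild w (by rw [hw.2]; exact Nat.one_pos)
    exact ⟨u, ⟨⟨hu, w, hw, hwu⟩, hwu⟩, fun u' ⟨_, hwu'⟩ => hw.eq_of_arc hwu' hwu⟩
  · obtain ⟨hu, w, hw, hwu⟩ := hu
    exact ⟨w, ⟨hw, hwu⟩, fun w' ⟨_, hw'u⟩ => hu.eq_of_arc hw'u hwu⟩

/-- An arc `x → w` into a hybrid node `w` corresponds to the other child of `x`. -/
theorem card_isTreeNode_hasHybridSibling :
    Nat.card {u // IsTreeNode N.Arc u ∧ ¬ HasHybridParent N.Arc u ∧ HasHybridSibling N.Arc u} =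
      2 * Nat.card {w // IsHybrid N.Arc w} := by
  rw [← card_arc_of_indeg_eq fun w (hw : IsHybrid N.Arc w) => hw.1]
  refine (Nat.card_eq_of_existsUnique (fun e u => N.Arc e.1 u ∧ u ≠ e.2) ?_ ?_).symm
  · rintro ⟨x, w⟩ ⟨hw, hxw⟩
    have hx := not_isHybrid_of_arc_isHybrid hw hxw
    obtain ⟨u, hxu, huw⟩ := exists_arc_ne hx hxw
    have hu := isTreeNode_of_arc_of_arc_isHybrid hw hxu hxw huw
    exact ⟨u, ⟨⟨hu, not_hasHybridParent_of_arc hu hxu hx, w, x, hw, huw.symm, hxu, hxw⟩, hxu, huw⟩,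
      fun u' ⟨_, hxu', hu'w⟩ => eq_of_arc_of_outdeg_le_two (N.outdeg_le_two x) hxu' hxu hxw hu'w huw⟩
  · rintro u ⟨hu, -, w, x, hw, hwu, hxu, hxw⟩
    refine ⟨(x, w), ⟨⟨hw, hxw⟩, hxu, hwu.symm⟩, ?_⟩
    rintro ⟨x', w'⟩ ⟨⟨-, hx'w'⟩, hx'u, huw'⟩
    obtain rfl := hu.eq_of_arc hx'u hxu
    obtain rfl := eq_of_arc_of_outdeg_le_two (N.outdeg_le_two x') hx'w' hxw hx'u huw'.symm hwu
    rfl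

theorem card_isHybridFreeTreeNode :
    Nat.card {u // IsHybridFreeTreeNode N.Arc u} + 2 * Nat.card {w // IsHybrid N.Arc w} + 1 =
      2 * Nat.card {v // IsLeaf N.Arc v} := by
  have hparent := Nat.card_subtype_and_add_card_subtype_and_not (IsTreeNode N.Arc)
    (HasHybridParent N.Arc)
  have hsibling := Nat.card_subtype_and_add_card_subtype_and_not
    (fun u => IsTreeNode N.Arc u ∧ ¬ HasHybridParent N.Arc u) (HasHybridSibling N.Arc)
  simp only [and_assoc] at hsibling
  have := N.card_add_one_eq
  have := N.card_isTreeNode_add_card_isHybrid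
  have := N.card_isTreeNode_hasHybridParent
  have := N.card_isTreeNode_hasHybridSibling
  unfold IsHybridFreeTreeNode
  omega

end BTC

/-- In a binary tree-child network with n leaves and h hybrid nodes, the set of
tree nodes having neither a hybrid parent nor a hybrid sibling consists of the
root together with (n - h - 1) pairwise disjoint pairs of sibling tree nodes. -/
theorem stmt10 {V : Type} [Finite V] (N : BTC V) (n h : ℕ)
    (hn : n = Nat.card {v : V // IsLeaf N.Arc v})
    (hh : h = Nat.card {v : V // IsHybrid N.Arc v}) :
    ∃ (r : V) (P : Finset (V × V)),
      indeg N.Arc r = 0 ∧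
      (P.card : ℤ) = (n : ℤ) - (h : ℤ) - 1 ∧
      (∀ q ∈ P, q.1 ≠ q.2 ∧ (∃ x : V, N.Arc x q.1 ∧ N.Arc x q.2)) ∧
      (∀ q ∈ P, ∀ q' ∈ P, q ≠ q' →
        q.1 ≠ q'.1 ∧ q.1 ≠ q'.2 ∧ q.2 ≠ q'.1 ∧ q.2 ≠ q'.2) ∧
      (∀ u : V,
        (IsTreeNode N.Arc u ∧ ¬ HasHybridParent N.Arc u ∧
          ¬ HasHybridSibling N.Arc u) ↔
        (u = r ∨ ∃ q ∈ P, u = q.1 ∨ u = q.2)) := by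
  classical
  cases nonempty_fintype V
  obtain ⟨r, hr, hr_unique⟩ := N.uniqueRoot
  have hr_free := BTC.isHybridFreeTreeNode_of_indeg_eq_zero (N := N) hr
  set S := (univ.filter (IsHybridFreeTreeNode N.Arc)).erase r
  have hmemS : ∀ u, u ∈ S ↔ IsHybridFreeTreeNode N.Arc u ∧ indeg N.Arc u ≠ 0 := fun u => by
    have : u ≠ r ↔ indeg N.Arc u ≠ 0 := not_congr ⟨fun hu => hu ▸ hr, hr_unique u⟩
    simp [S, this, and_comm]
  obtain ⟨P, hP, hsiblings, hdisjoint, hcover⟩ :=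
    exists_pairing (S := S) (R := Siblings N.Arc) (fun _ _ h => h.symm) (fun _ h => h.1 rfl)
      fun u hu => by
        simp only [hmemS] at hu ⊢
        exact BTC.existsUnique_siblings_of_isHybridFreeTreeNode hu.1 hu.2
  have hcard : #S + 1 = Nat.card {u // IsHybridFreeTreeNode N.Arc u} := by
    rw [card_erase_add_one (by simpa using hr_free), Nat.card_eq_fintype_card,
      Fintype.card_subtype]
  have := N.card_isHybridFreeTreeNode
  refine ⟨r, P, hr, by omega, hsiblings, hdisjoint, fun u => ?_⟩
  change IsHybridFreeTreeNode N.Arc u ↔ _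
  rw [← hcover, mem_erase, mem_filter]
  by_cases hu : u = r
  · simp [hu, hr_free]
  · simp [hu]
end

section
/- The only automorphism of a binary tree-child phylogenetic network fixing all leaves (as a leaf-labeled directed graph) is the identity. -/
/-
Induct upwards from the leaves along the acyclic arc relation. If all children of a non-leaf
`v` are fixed, pick a tree child `w`: then `φ v` is a parent of `φ w = w` as well, and a tree
node has at most one parent, so `φ v = v`.
-/

theorem wellFounded_flip_of_acyclic {V : Type} [Finite V] {A : V → V → Prop}
    (hA : ∀ v, ¬ Relation.TransGen A v v) : WellFounded (flip A) := by
  have : IsTrans V (flip (Relation.TransGen A)) := ⟨fun _ _ _ hab hbc => hbc.trans hab⟩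
  have : Std.Irrefl (flip (Relation.TransGen A)) := ⟨hA⟩
  exact Subrelation.wf (r := flip (Relation.TransGen A)) (fun h => .single h)
    (Finite.wellFounded_of_trans_of_irrefl _)

theorem eq_of_arc_of_indeg_le_one_s13 {V : Type} [Finite V] {A : V → V → Prop} {u u' w : V}
    (hw : indeg A w ≤ 1) (hu : A u w) (hu' : A u' w) : u = u' := by
  have : Subsingleton {x // A x w} := Finite.card_le_one_iff_subsingleton.mp hw
  exact congrArg Subtype.val (Subsingleton.elim (⟨u, hu⟩ : {x // A x w}) ⟨u', hu'⟩)

theorem IsTreeNode.indeg_le_one {V : Type} {A : V → V → Prop} {v : V} (hv : IsTreeNode A v) :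
    indeg A v ≤ 1 := by
  rcases hv with ⟨h, _⟩ | ⟨h, _⟩ | ⟨h, _⟩ <;> omega

namespace BTC

variable {V : Type} [Finite V] (N : BTC V)

theorem outdeg_pos_of_not_isLeaf {v : V} (hv : ¬ IsLeaf N.Arc v) : 0 < outdeg N.Arc v := by
  rcases N.binary v with (h | ⟨_, h⟩ | ⟨_, h⟩) | ⟨_, h⟩
  · exact absurd h hv
  all_goals omega

theorem exists_treeNode_child_of_not_isLeaf {v : V} (hv : ¬ IsLeaf N.Arc v) :
    ∃ w, N.Arc v w ∧ IsTreeNode N.Arc w :=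
  N.treeChild v (N.outdeg_pos_of_not_isLeaf hv)

theorem apply_eq_of_forall_child {φ : V → V} (hφ : ∀ u v, N.Arc u v → N.Arc (φ u) (φ v))
    {v : V} (hv : ¬ IsLeaf N.Arc v) (hchild : ∀ w, N.Arc v w → φ w = w) : φ v = v := by
  obtain ⟨w, hvw, hw⟩ := N.exists_treeNode_child_of_not_isLeaf hv
  have hφvw : N.Arc (φ v) w := hchild w hvw ▸ hφ v w hvw
  exact eq_of_arc_of_indeg_le_one_s13 hw.indeg_le_one hφvw hvw

end BTC

/-- The only automorphism of a binary tree-child phylogenetic network fixing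
all leaves (as a leaf-labeled directed graph) is the identity. -/
theorem stmt13 {V : Type} [Finite V] (N : BTC V) (φ : V ≃ V)
    (harc : ∀ u v : V, N.Arc u v ↔ N.Arc (φ u) (φ v))
    (hleaf : ∀ v : V, IsLeaf N.Arc v → φ v = v) :
    ∀ v : V, φ v = v := by
  intro v
  induction v using (wellFounded_flip_of_acyclic N.acyclic).induction with
  | _ v ih =>
    by_cases hv : IsLeaf N.Arc v
    · exact hleaf v hv
    · exact N.apply_eq_of_forall_child (fun u w => (harc u w).mp) hv ih
end
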